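/- arXiv:2302.04714 — 2 statements merged into one kernel-verified Lean document; each statement's English description precedes it below -/
import Mathlib

section
/- Let K be a field, n = d⁺ + d⁻ with d⁺, d⁻ ≥ 0, and define f⁺(X) to be the determinant of the top-left d⁺×d⁺ block of an n×n matrix X. Then for every lower triangular n×n matrix L, every n×n matrix A, and every block diagonal matrix D = diag(B, C) with B ∈ GL_{d⁺}(K) and C ∈ GL_{d⁻}(K), one has f⁺(L·A·D) = (∏_{i=1}^{d⁺} L_{ii}) · det(B) · f⁺(A). -/
/-!
Reindex `Fin (dp + dm)` as `Fin dp ⊕ Fin dm`, so that `f⁺` is the determinant of the `(1,1)` block.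
The `(1,1)` block of a product `M * N` is the product of the `(1,1)` blocks as soon as `M` has
vanishing `(1,2)` block (true for lower triangular `L`) or `N` has vanishing `(2,1)` block (true for
`diag(B, C)`). Hence `f⁺(L A D) = det L₁₁ · f⁺(A) · det B`, and `L₁₁` is again lower triangular.
-/

namespace Matrix

section BlockProduct

variable {α : Type*} [NonUnitalNonAssocSemiring α] {l l' m m' n n' : Type*} [Fintype m] [Fintype m']

theorem toBlocks₁₁_mul_of_toBlocks₁₂_eq_zero (M : Matrix (l ⊕ l') (m ⊕ m') α)
    (N : Matrix (m ⊕ m') (n ⊕ n') α) (hM : M.toBlocks₁₂ = 0) :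
    (M * N).toBlocks₁₁ = M.toBlocks₁₁ * N.toBlocks₁₁ := by
  rw [← fromBlocks_toBlocks M, ← fromBlocks_toBlocks N, fromBlocks_multiply, hM]
  simp

theorem toBlocks₁₁_mul_of_toBlocks₂₁_eq_zero (M : Matrix (l ⊕ l') (m ⊕ m') α)
    (N : Matrix (m ⊕ m') (n ⊕ n') α) (hN : N.toBlocks₂₁ = 0) :
    (M * N).toBlocks₁₁ = M.toBlocks₁₁ * N.toBlocks₁₁ := by
  rw [← fromBlocks_toBlocks M, ← fromBlocks_toBlocks N, fromBlocks_multiply, hN]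
  simp

end BlockProduct

theorem IsLowerTriangular.submatrix_of_strictMono {R l m : Type*} [Zero R] [Preorder l] [Preorder m]
    {M : Matrix m m R} (hM : M.IsLowerTriangular) {f : l → m} (hf : StrictMono f) :
    (M.submatrix f f).IsLowerTriangular :=
  fun _ _ hij => hM (hf hij)

theorem submatrix_castAdd_castAdd {R : Type*} (p q : ℕ) (X : Matrix (Fin (p + q)) (Fin (p + q)) R) :
    X.submatrix (Fin.castAdd q) (Fin.castAdd q) =
      (X.submatrix finSumFinEquiv finSumFinEquiv).toBlocks₁₁ :=
  rfl

theorem toBlocks₁₂_submatrix_finSumFinEquiv_of_isLowerTriangular {R : Type*} [Zero R] {p q : ℕ}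
    {L : Matrix (Fin (p + q)) (Fin (p + q)) R} (hL : L.IsLowerTriangular) :
    (L.submatrix finSumFinEquiv finSumFinEquiv).toBlocks₁₂ = 0 := by
  ext i j
  exact hL (show Fin.castAdd q i < Fin.natAdd p j by
    simp only [Fin.lt_def, Fin.val_castAdd, Fin.val_natAdd]; omega)

end Matrix

open Matrix in
theorem fplus_transformation_general {K : Type*} [Field K] (dp dm : ℕ)
    (L A : Matrix (Fin (dp + dm)) (Fin (dp + dm)) K)
    (hL : ∀ i j : Fin (dp + dm), i < j → L i j = 0)
    (B : Matrix (Fin dp) (Fin dp) K) (C : Matrix (Fin dm) (Fin dm) K) :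
    ((L * A * ((Matrix.fromBlocks B 0 0 C).submatrix finSumFinEquiv.symm finSumFinEquiv.symm)).submatrix
        (Fin.castAdd dm) (Fin.castAdd dm)).det =
      (∏ i : Fin dp, L (Fin.castAdd dm i) (Fin.castAdd dm i)) * B.det *
        (A.submatrix (Fin.castAdd dm) (Fin.castAdd dm)).det := by
  have hLower : L.IsLowerTriangular := fun i j => hL i j
  have hTop : (L.submatrix (Fin.castAdd dm) (Fin.castAdd dm)).IsLowerTriangular :=
    hLower.submatrix_of_strictMono (Fin.strictMono_castAdd dm)
  set e : Fin dp ⊕ Fin dm ≃ Fin (dp + dm) := finSumFinEquiv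
  have hReindex : (L * A * (fromBlocks B 0 0 C).submatrix e.symm e.symm).submatrix e e =
      L.submatrix e e * A.submatrix e e * fromBlocks B 0 0 C := by
    rw [← submatrix_mul_equiv (e₂ := e), ← submatrix_mul_equiv (e₂ := e)]
    simp
  rw [submatrix_castAdd_castAdd, hReindex,
    toBlocks₁₁_mul_of_toBlocks₂₁_eq_zero _ _ (toBlocks_fromBlocks₂₁ B 0 0 C),
    toBlocks₁₁_mul_of_toBlocks₁₂_eq_zero _ _
      (toBlocks₁₂_submatrix_finSumFinEquiv_of_isLowerTriangular hLower),
    toBlocks_fromBlocks₁₁, det_mul, det_mul, ← submatrix_castAdd_castAdd,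
    det_of_isLowerTriangular _ hTop, ← submatrix_castAdd_castAdd]
  simp only [submatrix_apply]
  ring

/-- Transformation law for Yoshida's admissible polynomial `f⁺` (determinant of
the top-left `d⁺×d⁺` block): `f⁺(L·A·diag(B,C)) = (∏ L_ii over i ≤ d⁺) · det B · f⁺(A)`
for `L` lower triangular and `B ∈ GL_{d⁺}`, `C ∈ GL_{d⁻}`. -/
theorem fplus_transformation {K : Type*} [Field K] (dp dm : ℕ)
    (L A : Matrix (Fin (dp + dm)) (Fin (dp + dm)) K)
    (hL : ∀ i j : Fin (dp + dm), i < j → L i j = 0)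
    (B : Matrix (Fin dp) (Fin dp) K) (C : Matrix (Fin dm) (Fin dm) K)
    (hB : IsUnit B.det) (hC : IsUnit C.det) :
    ((L * A * ((Matrix.fromBlocks B 0 0 C).submatrix finSumFinEquiv.symm finSumFinEquiv.symm)).submatrix
        (Fin.castAdd dm) (Fin.castAdd dm)).det =
      (∏ i : Fin dp, L (Fin.castAdd dm i) (Fin.castAdd dm i)) * B.det *
        (A.submatrix (Fin.castAdd dm) (Fin.castAdd dm)).det :=
  fplus_transformation_general dp dm L A hL B C
end

section
/- Let K be a field, n = d⁺ + d⁻ with d⁺, d⁻ ≥ 0, and define f⁻(X) to be the determinant of the top-right d⁻×d⁻ block of an n×n matrix X (entries X_{ij} with 1 ≤ i ≤ d⁻ and d⁺ < j ≤ n). Then for every lower triangular n×n matrix L, every n×n matrix A, and every block diagonal matrix D = diag(B, C) with B ∈ GL_{d⁺}(K), C ∈ GL_{d⁻}(K), one has f⁻(L·A·D) = (∏_{i=1}^{d⁻} L_{ii}) · det(C) · f⁻(A). -/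
/-- Transformation law for Yoshida's admissible polynomial `f⁻` (determinant of
the top-right `d⁻×d⁻` block, rows `1..d⁻`, columns `d⁺+1..n`):
`f⁻(L·A·diag(B,C)) = (∏ L_ii over i ≤ d⁻) · det C · f⁻(A)`. -/
theorem fminus_transformation {K : Type*} [Field K] (dp dm : ℕ)
    (L A : Matrix (Fin (dp + dm)) (Fin (dp + dm)) K)
    (hL : ∀ i j : Fin (dp + dm), i < j → L i j = 0)
    (B : Matrix (Fin dp) (Fin dp) K) (C : Matrix (Fin dm) (Fin dm) K)
    (hB : IsUnit B.det) (hC : IsUnit C.det) :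
    ((L * A * ((Matrix.fromBlocks B 0 0 C).submatrix finSumFinEquiv.symm finSumFinEquiv.symm)).submatrix
        (Fin.castLE (Nat.le_add_left dm dp)) (Fin.natAdd dp)).det =
      (∏ i : Fin dm, L (Fin.castLE (Nat.le_add_left dm dp) i)
          (Fin.castLE (Nat.le_add_left dm dp) i)) * C.det *
        (A.submatrix (Fin.castLE (Nat.le_add_left dm dp)) (Fin.natAdd dp)).det := by
  set e : Fin dm → Fin (dp + dm) := Fin.castLE (Nat.le_add_left dm dp) with he
  set g : Fin dm → Fin (dp + dm) := Fin.natAdd dp with hg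
  set D : Matrix (Fin (dp + dm)) (Fin (dp + dm)) K :=
    (Matrix.fromBlocks B 0 0 C).submatrix finSumFinEquiv.symm finSumFinEquiv.symm with hD
  have h1 : (A * D).submatrix e g = A.submatrix e g * C := by
    ext i j
    rw [Matrix.submatrix_apply, Matrix.mul_apply, Matrix.mul_apply,
      ← finSumFinEquiv.sum_comp]
    rw [Fintype.sum_sum_type]
    have hz : ∀ m : Fin dp, D (finSumFinEquiv (Sum.inl m)) (g j) = 0 := by
      intro m
      have : g j = finSumFinEquiv (Sum.inr j) := by
        simp [hg, finSumFinEquiv_apply_right]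
      simp [hD, this]
    simp only [hz, mul_zero, Finset.sum_const_zero, zero_add]
    refine Finset.sum_congr rfl fun m _ => ?_
    have : g j = finSumFinEquiv (Sum.inr j) := by
      simp [hg, finSumFinEquiv_apply_right]
    simp [hD, this]
    exact Or.inl rfl
  let eq : (Fin dm ⊕ Fin dp) ≃ Fin (dp + dm) :=
    finSumFinEquiv.trans (finCongr (Nat.add_comm dm dp))
  have heq : ∀ m : Fin dm, eq (Sum.inl m) = e m := by
    intro m; apply Fin.ext; simp [eq, he]
  have h2 : ∀ N : Matrix (Fin (dp + dm)) (Fin (dp + dm)) K,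
      (L * N).submatrix e g = L.submatrix e e * N.submatrix e g := by
    intro N
    ext i j
    rw [Matrix.submatrix_apply, Matrix.mul_apply, Matrix.mul_apply, ← eq.sum_comp,
      Fintype.sum_sum_type]
    have hz : ∀ m : Fin dp, L (e i) (eq (Sum.inr m)) = 0 := by
      intro m
      apply hL
      have h1 : (e i : ℕ) = i := rfl
      have h2 : ((eq (Sum.inr m)) : ℕ) = dm + m := by simp [eq]; omega
      rw [Fin.lt_def, h1, h2]
      omega
    simp only [hz, zero_mul, Finset.sum_const_zero, add_zero, heq]
    simp
  rw [mul_assoc, h2, h1, ← mul_assoc, Matrix.det_mul, Matrix.det_mul]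
  have hdiag : (L.submatrix e e).det = ∏ i : Fin dm, L (e i) (e i) := by
    rw [Matrix.det_of_lowerTriangular]
    · rfl
    · intro i j hij
      apply hL
      exact hij
  rw [hdiag]
  ring
end
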